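/- arXiv:2501.03867 — 2 statements merged into one kernel-verified Lean document; each statement's English description precedes it below -/
import Mathlib

section
/- Let f be a nonnegative measure on (0,∞), x₀ > 0, r > 1, and F(a) = f([a, ra]). Then ∫_{x₀}^∞ F(a) da ≥ ((r−1)/r) · ∫_{x₀}^∞ (x − x₀) f(dx), where the last integral is over x ∈ (x₀, ∞). -/
open MeasureTheory Set

theorem fubini_lower_bound (f : Measure ℝ) (x₀ r : ℝ) (hx₀ : 0 < x₀) (hr : 1 < r) :
    ENNReal.ofReal ((r - 1) / r) * ∫⁻ x in Ioi x₀, ENNReal.ofReal (x - x₀) ∂f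
      ≤ ∫⁻ a in Ici x₀, f (Icc a (r * a)) := by
  have hr0 : (0:ℝ) < r := lt_trans one_pos hr
  have hc0 : (0:ℝ) ≤ (r - 1) / r := div_nonneg (by linarith) hr0.le
  set G : ℝ → ENNReal := fun b => f (Ici b) with hG
  have hGanti : Antitone G := fun b b' h => measure_mono (Ici_subset_Ici.mpr h)
  have hGmeas : Measurable G := hGanti.measurable
  set g : ℕ → ℝ → ENNReal := fun n a => min (f (Icc a (n:ℝ))) (n : ENNReal) with hg
  have hgmeas : ∀ n, Measurable (g n) := fun n =>
    (Antitone.measurable fun a a' h => measure_mono (Icc_subset_Icc_left h)).min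
      measurable_const
  have hgmono : Monotone g := by
    intro n m hnm a
    exact min_le_min (measure_mono (Icc_subset_Icc_right (Nat.cast_le.mpr hnm)))
      (Nat.cast_le.mpr hnm)
  have hgsup : ∀ a, (⨆ n, g n a) = G a := by
    intro a
    refine le_antisymm (iSup_le fun n =>
      le_trans (min_le_left _ _) (measure_mono Icc_subset_Ici_self)) ?_
    have hU : Ici a = ⋃ n : ℕ, Icc a (n:ℝ) := by
      ext x
      simp only [mem_Ici, mem_iUnion, mem_Icc]
      constructor
      · intro h
        obtain ⟨n, hn⟩ := exists_nat_ge x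
        exact ⟨n, h, hn⟩
      · rintro ⟨n, h, _⟩; exact h
    have hcont : G a = ⨆ n : ℕ, f (Icc a (n:ℝ)) := by
      rw [hG]
      simp only
      rw [hU]
      exact Directed.measure_iUnion
        (Monotone.directed_le fun i j hij => Icc_subset_Icc_right (Nat.cast_le.mpr hij))
    refine le_of_forall_lt fun d hd => ?_
    rw [lt_iSup_iff]
    have hd' : d < ⨆ n : ℕ, f (Icc a (n:ℝ)) := by rw [← hcont]; exact hd
    obtain ⟨N, hN⟩ := lt_iSup_iff.mp hd'
    obtain ⟨k, hk⟩ := ENNReal.exists_nat_gt hd.ne_top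
    refine ⟨max N k, lt_min ?_ ?_⟩
    · exact hN.trans_le (measure_mono (Icc_subset_Icc_right
        (Nat.cast_le.mpr (le_max_left N k))))
    · exact hk.trans_le (Nat.cast_le.mpr (le_max_right N k))
  set J : ENNReal := ∫⁻ a in Ioi x₀, f (Icc a (r * a)) with hJ
  set H : ℕ → ENNReal := fun n => ∫⁻ a in Ioi x₀, g n a with hH
  have hHfin : ∀ n, H n ≠ ⊤ := by
    intro n
    have hle : H n ≤ (n : ENNReal) * volume (Iic (n:ℝ) ∩ Ioi x₀) := by
      rw [hH]
      calc ∫⁻ a in Ioi x₀, g n a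
          ≤ ∫⁻ a in Ioi x₀, (Iic (n:ℝ)).indicator (fun _ => (n : ENNReal)) a := by
            refine setLIntegral_mono' measurableSet_Ioi fun a _ => ?_
            by_cases han : a ≤ (n:ℝ)
            · simp only [indicator_of_mem (mem_Iic.mpr han)]
              exact min_le_right _ _
            · simp only [indicator_of_notMem (fun h => han (mem_Iic.mp h))]
              refine le_trans (min_le_left _ _) (le_of_eq ?_)
              rw [Icc_eq_empty han, measure_empty]
        _ = (n : ENNReal) * volume (Iic (n:ℝ) ∩ Ioi x₀) := by
            rw [lintegral_indicator measurableSet_Iic, setLIntegral_const,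
              Measure.restrict_apply measurableSet_Iic]
    refine ne_top_of_le_ne_top ?_ hle
    refine ENNReal.mul_ne_top (ENNReal.natCast_ne_top n) ?_
    have : Iic (n:ℝ) ∩ Ioi x₀ = Ioc x₀ (n:ℝ) := by
      ext y; simp only [mem_inter_iff, mem_Iic, mem_Ioi, mem_Ioc]; tauto
    rw [this, Real.volume_Ioc]
    exact ENNReal.ofReal_ne_top
  have hscale : ∀ n, ∫⁻ a in Ioi x₀, g n (r * a)
      = ENNReal.ofReal r⁻¹ * ∫⁻ b in Ioi (r * x₀), g n b := by
    intro n
    have hpre : Ioi x₀ = (r * ·) ⁻¹' (Ioi (r * x₀)) := by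
      ext a
      simp only [mem_preimage, mem_Ioi]
      exact (mul_lt_mul_iff_right₀ hr0).symm
    have hmap : (volume.restrict (Ioi x₀)).map (r * ·)
        = (ENNReal.ofReal |r⁻¹| • volume).restrict (Ioi (r * x₀)) := by
      rw [hpre, ← Measure.restrict_map (measurable_const_mul r) measurableSet_Ioi,
        Real.map_volume_mul_left hr0.ne']
    calc ∫⁻ a in Ioi x₀, g n (r * a)
        = ∫⁻ b, g n b ∂((volume.restrict (Ioi x₀)).map (r * ·)) :=
          (lintegral_map (hgmeas n) (measurable_const_mul r)).symm
      _ = ENNReal.ofReal r⁻¹ * ∫⁻ b in Ioi (r * x₀), g n b := by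
          rw [hmap, Measure.restrict_smul, lintegral_smul_measure,
            abs_of_pos (inv_pos.mpr hr0), smul_eq_mul]
  have hkey : ∀ n, H n ≤ J + ENNReal.ofReal r⁻¹ * H n := by
    intro n
    calc H n ≤ ∫⁻ a in Ioi x₀, (f (Icc a (r * a)) + g n (r * a)) := by
          refine setLIntegral_mono' measurableSet_Ioi fun a _ => ?_
          have hsub : Icc a (n:ℝ) ⊆ Icc a (r * a) ∪ Icc (r * a) (n:ℝ) := by
            intro x hx
            rcases le_total x (r * a) with h | h
            · exact Or.inl ⟨hx.1, h⟩
            · exact Or.inr ⟨h, hx.2⟩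
          have h1 : f (Icc a (n:ℝ)) ≤ f (Icc a (r * a)) + f (Icc (r * a) (n:ℝ)) :=
            (measure_mono hsub).trans (measure_union_le _ _)
          calc g n a ≤ min (f (Icc a (r * a)) + f (Icc (r * a) (n:ℝ))) (n : ENNReal) :=
                min_le_min h1 le_rfl
            _ ≤ f (Icc a (r * a)) + g n (r * a) := by
                rcases le_total (f (Icc (r * a) (n:ℝ))) ((n : ENNReal)) with h | h
                · rw [hg]; simp only
                  rw [min_eq_left h]
                  exact min_le_left _ _
                · rw [hg]; simp only
                  rw [min_eq_right h]
                  exact le_trans (min_le_right _ _) le_add_self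
      _ = J + ∫⁻ a in Ioi x₀, g n (r * a) :=
          lintegral_add_right _ ((hgmeas n).comp (measurable_const_mul r))
      _ = J + ENNReal.ofReal r⁻¹ * ∫⁻ b in Ioi (r * x₀), g n b := by rw [hscale]
      _ ≤ J + ENNReal.ofReal r⁻¹ * H n := by
          refine add_le_add_right (mul_le_mul_right ?_ _) _
          exact lintegral_mono' (Measure.restrict_mono
            (Ioi_subset_Ioi (by nlinarith)) le_rfl) le_rfl
  have hcH : ∀ n, ENNReal.ofReal ((r - 1) / r) * H n ≤ J := by
    intro n
    have hsum : ENNReal.ofReal ((r - 1) / r) * H n + ENNReal.ofReal r⁻¹ * H n = H n := by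
      rw [← add_mul, ← ENNReal.ofReal_add hc0 (inv_nonneg.mpr hr0.le)]
      have : (r - 1) / r + r⁻¹ = 1 := by field_simp; ring
      rw [this, ENNReal.ofReal_one, one_mul]
    have hcomb : ENNReal.ofReal ((r - 1) / r) * H n + ENNReal.ofReal r⁻¹ * H n
        ≤ J + ENNReal.ofReal r⁻¹ * H n := by rw [hsum]; exact hkey n
    exact (ENNReal.add_le_add_iff_right
      (ENNReal.mul_ne_top ENNReal.ofReal_ne_top (hHfin n))).mp hcomb
  have hHsup : ∫⁻ a in Ioi x₀, G a = ⨆ n, H n := by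
    calc ∫⁻ a in Ioi x₀, G a = ∫⁻ a in Ioi x₀, ⨆ n, g n a :=
          lintegral_congr fun a => (hgsup a).symm
      _ = ⨆ n, H n := lintegral_iSup hgmeas hgmono
  have hlayer : ∫⁻ x in Ioi x₀, ENNReal.ofReal (x - x₀) ∂f = ∫⁻ a in Ioi x₀, G a := by
    have f_nn : 0 ≤ᵐ[f.restrict (Ioi x₀)] fun x => x - x₀ := by
      filter_upwards [ae_restrict_mem measurableSet_Ioi] with x hx
      simp only [Pi.zero_apply]
      have : x₀ < x := hx
      linarith
    have h1 := lintegral_eq_lintegral_meas_le (f.restrict (Ioi x₀)) f_nn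
      ((measurable_id.sub measurable_const).aemeasurable)
    rw [h1]
    have h2 : ∀ t ∈ Ioi (0:ℝ), (f.restrict (Ioi x₀)) {x | t ≤ x - x₀} = G (x₀ + t) := by
      intro t ht
      have htpos : (0:ℝ) < t := ht
      have hms : MeasurableSet {x : ℝ | t ≤ x - x₀} :=
        measurableSet_le measurable_const (measurable_id.sub measurable_const)
      rw [Measure.restrict_apply hms]
      rw [hG]
      congr 1
      ext x
      simp only [mem_inter_iff, mem_setOf_eq, mem_Ioi, mem_Ici]
      constructor
      · rintro ⟨h1', _⟩; linarith
      · intro h; constructor <;> linarith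
    rw [setLIntegral_congr_fun measurableSet_Ioi h2]
    have hpre : Ioi (0:ℝ) = (x₀ + ·) ⁻¹' (Ioi x₀) := by
      ext t
      simp only [mem_preimage, mem_Ioi]
      exact (lt_add_iff_pos_right x₀).symm
    have hmapT : (volume.restrict (Ioi (0:ℝ))).map (x₀ + ·) = volume.restrict (Ioi x₀) := by
      rw [hpre, ← Measure.restrict_map (measurable_const_add x₀) measurableSet_Ioi,
        map_add_left_eq_self volume x₀]
    rw [← hmapT, lintegral_map hGmeas (measurable_const_add x₀)]
  calc ENNReal.ofReal ((r - 1) / r) * ∫⁻ x in Ioi x₀, ENNReal.ofReal (x - x₀) ∂f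
      = ENNReal.ofReal ((r - 1) / r) * ⨆ n, H n := by rw [hlayer, hHsup]
    _ = ⨆ n, ENNReal.ofReal ((r - 1) / r) * H n := by rw [ENNReal.mul_iSup]
    _ ≤ J := iSup_le hcH
    _ ≤ ∫⁻ a in Ici x₀, f (Icc a (r * a)) :=
        lintegral_mono' (Measure.restrict_mono Ioi_subset_Ici_self le_rfl) le_rfl
end

section
/- Let f be a nonnegative measure on (0,∞), a > 0, and A ≥ ∫_0^∞ y f(dy). Then ∫_0^a y·log(e+y) f(dy) ≤ A · log(e + (1/A)·∫_0^a y² f(dy)). -/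
open MeasureTheory Set

/-- Tangent line inequality for the concave function `log (e + ·)`. -/
lemma log_tangent (c y : ℝ) (hc : 0 ≤ c) (hy : 0 ≤ y) :
    Real.log (Real.exp 1 + y)
      ≤ Real.log (Real.exp 1 + c) + (y - c) / (Real.exp 1 + c) := by
  have he : (0:ℝ) < Real.exp 1 := Real.exp_pos 1
  have hec : 0 < Real.exp 1 + c := by linarith
  have hey : 0 < Real.exp 1 + y := by linarith
  have h1 : Real.log (Real.exp 1 + y) - Real.log (Real.exp 1 + c)
      = Real.log ((Real.exp 1 + y) / (Real.exp 1 + c)) :=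
    (Real.log_div hey.ne' hec.ne').symm
  have h2 : Real.log ((Real.exp 1 + y) / (Real.exp 1 + c))
      ≤ (Real.exp 1 + y) / (Real.exp 1 + c) - 1 :=
    Real.log_le_sub_one_of_pos (by positivity)
  have h3 : (Real.exp 1 + y) / (Real.exp 1 + c) - 1 = (y - c) / (Real.exp 1 + c) := by
    field_simp
    ring
  linarith [h1, h2, h3.symm ▸ h2]

/-- Monotonicity of `z ↦ z * log (e + b / z)` on `(0, ∞)`. -/
lemma zlog_mono {b M A : ℝ} (hb : 0 ≤ b) (hM : 0 < M) (hMA : M ≤ A) :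
    M * Real.log (Real.exp 1 + b / M) ≤ A * Real.log (Real.exp 1 + b / A) := by
  have he : (0:ℝ) < Real.exp 1 := Real.exp_pos 1
  set g : ℝ → ℝ := fun z => z * Real.log (Real.exp 1 + b / z) with hg
  have hderiv : ∀ z : ℝ, 0 < z →
      HasDerivAt g (Real.log (Real.exp 1 + b / z)
        + z * ((Real.exp 1 + b / z)⁻¹ * (b * (-(z ^ 2)⁻¹)))) z := by
    intro z hz
    have hpos : 0 < Real.exp 1 + b / z := by positivity
    have h1 : HasDerivAt (fun z : ℝ => Real.exp 1 + b / z) (b * (-(z ^ 2)⁻¹)) z := by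
      simpa [div_eq_mul_inv] using ((hasDerivAt_inv hz.ne').const_mul b).const_add (Real.exp 1)
    have h2 : HasDerivAt (fun z : ℝ => Real.log (Real.exp 1 + b / z))
        ((Real.exp 1 + b / z)⁻¹ * (b * (-(z ^ 2)⁻¹))) z :=
      by have := (Real.hasDerivAt_log hpos.ne').comp z h1; exact this
    have h3 : HasDerivAt (fun z : ℝ => z * Real.log (Real.exp 1 + b / z))
        (1 * Real.log (Real.exp 1 + b / z)
          + z * ((Real.exp 1 + b / z)⁻¹ * (b * (-(z ^ 2)⁻¹)))) z := (hasDerivAt_id' z).mul h2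
    simpa only [hg, one_mul] using h3
  have hmono : MonotoneOn g (Ici M) := by
    apply monotoneOn_of_deriv_nonneg (convex_Ici M)
    · -- continuity
      apply ContinuousOn.mul continuousOn_id
      apply ContinuousOn.log
      · exact continuousOn_const.add (continuousOn_const.div continuousOn_id
          (fun z hz => (lt_of_lt_of_le hM hz).ne'))
      · intro z hz
        have hzpos : 0 < z := lt_of_lt_of_le hM hz
        positivity
    · intro z hz
      rw [interior_Ici] at hz
      exact ((hderiv z (hM.trans hz)).differentiableAt).differentiableWithinAt
    · intro z hz
      rw [interior_Ici] at hz
      have hzpos : 0 < z := hM.trans hz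
      rw [(hderiv z hzpos).deriv]
      have hpos : 0 < Real.exp 1 + b / z := by positivity
      have hlog : 1 ≤ Real.log (Real.exp 1 + b / z) := by
        rw [Real.le_log_iff_exp_le hpos]
        have : 0 ≤ b / z := by positivity
        linarith
      have hterm : z * ((Real.exp 1 + b / z)⁻¹ * (b * (z ^ 2)⁻¹)) ≤ 1 := by
        have h1 : z * ((Real.exp 1 + b / z)⁻¹ * (b * (z ^ 2)⁻¹))
            = (b / z) / (Real.exp 1 + b / z) := by
          field_simp
        rw [h1]
        rw [div_le_one hpos]
        linarith [he, div_nonneg hb hzpos.le]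
      have : z * ((Real.exp 1 + b / z)⁻¹ * (b * (-(z ^ 2)⁻¹)))
          = -(z * ((Real.exp 1 + b / z)⁻¹ * (b * (z ^ 2)⁻¹))) := by ring
      rw [this]
      linarith
  exact hmono (self_mem_Ici) (le_trans (le_refl M) hMA : A ∈ Ici M) hMA

theorem jensen_log_moment (f : Measure ℝ) (a A : ℝ) (ha : 0 < a) (hA : 0 < A)
    (hA1 : ∫⁻ y in Ioi (0 : ℝ), ENNReal.ofReal y ∂f ≤ ENNReal.ofReal A) :
    ∫⁻ y in Ioc (0 : ℝ) a, ENNReal.ofReal (y * Real.log (Real.exp 1 + y)) ∂f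
      ≤ ENNReal.ofReal (A * Real.log (Real.exp 1
          + (1 / A) * (∫⁻ y in Ioc (0 : ℝ) a, ENNReal.ofReal (y ^ 2) ∂f).toReal)) := by
  have he : (0:ℝ) < Real.exp 1 := Real.exp_pos 1
  have hone : (1:ℝ) ≤ Real.exp 1 := Real.one_le_exp (by norm_num)
  set μ := f.restrict (Ioc (0:ℝ) a) with hμdef
  have hae : ∀ᵐ y ∂μ, y ∈ Ioc (0:ℝ) a := ae_restrict_mem measurableSet_Ioc
  -- the first moment is finite
  have hm_le : ∫⁻ y, ENNReal.ofReal y ∂μ ≤ ENNReal.ofReal A := by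
    refine le_trans ?_ hA1
    exact lintegral_mono_set Ioc_subset_Ioi_self
  have hm_fin : ∫⁻ y, ENNReal.ofReal y ∂μ < ⊤ :=
    lt_of_le_of_lt hm_le ENNReal.ofReal_lt_top
  -- integrability of y
  have hInt_y : Integrable (fun y : ℝ => y) μ := by
    refine ⟨aestronglyMeasurable_id, ?_⟩
    rw [hasFiniteIntegral_iff_ofReal (hae.mono fun y hy => hy.1.le)]
    exact hm_fin
  -- integrability of y^2
  have hInt_sq : Integrable (fun y : ℝ => y ^ 2) μ := by
    refine Integrable.mono (hInt_y.const_mul a) ?_ ?_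
    · exact (continuous_pow 2).aestronglyMeasurable
    · filter_upwards [hae] with y hy
      simp only [norm_mul, Real.norm_eq_abs]
      rw [abs_of_nonneg (sq_nonneg y), abs_of_pos ha, abs_of_pos hy.1, pow_two]
      exact mul_le_mul_of_nonneg_right hy.2 hy.1.le
  -- integrability of y * log (e + y)
  have hInt_L : Integrable (fun y : ℝ => y * Real.log (Real.exp 1 + y)) μ := by
    refine Integrable.mono (hInt_y.const_mul (Real.log (Real.exp 1 + a))) ?_ ?_
    · exact (measurable_id.mul (Real.measurable_log.comp
        (measurable_const.add measurable_id))).aestronglyMeasurable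
    · filter_upwards [hae] with y hy
      have hypos := hy.1
      have hey : 0 < Real.exp 1 + y := by linarith
      have hlog1 : 1 ≤ Real.log (Real.exp 1 + y) := by
        rw [Real.le_log_iff_exp_le hey]; linarith
      have hloga : Real.log (Real.exp 1 + y) ≤ Real.log (Real.exp 1 + a) :=
        Real.log_le_log hey (by linarith [hy.2])
      simp only [norm_mul, Real.norm_eq_abs]
      rw [abs_of_pos hypos, abs_of_nonneg (by linarith : (0:ℝ) ≤ Real.log (Real.exp 1 + y)),
        abs_of_nonneg (by linarith : (0:ℝ) ≤ Real.log (Real.exp 1 + a)), mul_comm]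
      exact mul_le_mul_of_nonneg_right hloga hypos.le
  set M : ℝ := ∫ y, y ∂μ with hMdef
  set S : ℝ := ∫ y, y ^ 2 ∂μ with hSdef
  have hM_nonneg : 0 ≤ M := integral_nonneg_of_ae (hae.mono fun y hy => hy.1.le)
  have hS_nonneg : 0 ≤ S := integral_nonneg_of_ae (Filter.Eventually.of_forall fun y => sq_nonneg y)
  have hM_eq : ENNReal.ofReal M = ∫⁻ y, ENNReal.ofReal y ∂μ :=
    ofReal_integral_eq_lintegral_ofReal hInt_y (hae.mono fun y hy => hy.1.le)
  have hS_eq : ENNReal.ofReal S = ∫⁻ y, ENNReal.ofReal (y ^ 2) ∂μ :=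
    ofReal_integral_eq_lintegral_ofReal hInt_sq (Filter.Eventually.of_forall fun y => sq_nonneg y)
  have hMA : M ≤ A := by
    have := hM_eq ▸ hm_le
    rwa [ENNReal.ofReal_le_ofReal_iff hA.le] at this
  -- rewrite the S in the goal
  have hS_toReal : (∫⁻ y in Ioc (0:ℝ) a, ENNReal.ofReal (y ^ 2) ∂f).toReal = S := by
    rw [show (∫⁻ y in Ioc (0:ℝ) a, ENNReal.ofReal (y ^ 2) ∂f) = ∫⁻ y, ENNReal.ofReal (y ^ 2) ∂μ
      from rfl, ← hS_eq, ENNReal.toReal_ofReal hS_nonneg]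
  rw [hS_toReal]
  -- nonnegativity of the integrand
  have hL_nonneg : 0 ≤ᵐ[μ] fun y => y * Real.log (Real.exp 1 + y) := by
    filter_upwards [hae] with y hy
    have hey : 0 < Real.exp 1 + y := by linarith [hy.1]
    have : 0 ≤ Real.log (Real.exp 1 + y) := Real.log_nonneg (by linarith [hy.1])
    exact mul_nonneg hy.1.le this
  have hL_eq : ∫⁻ y in Ioc (0:ℝ) a, ENNReal.ofReal (y * Real.log (Real.exp 1 + y)) ∂f
      = ENNReal.ofReal (∫ y, y * Real.log (Real.exp 1 + y) ∂μ) :=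
    (ofReal_integral_eq_lintegral_ofReal hInt_L hL_nonneg).symm
  rw [hL_eq]
  apply ENNReal.ofReal_le_ofReal
  -- now a real inequality
  rcases eq_or_lt_of_le hM_nonneg with hM0 | hMpos
  · -- M = 0 : measure is null on (0, a]
    have hm0 : ∫⁻ y, ENNReal.ofReal y ∂μ = 0 := by rw [← hM_eq, ← hM0]; simp
    have hzero : (fun y : ℝ => ENNReal.ofReal y) =ᵐ[μ] 0 :=
      (lintegral_eq_zero_iff ENNReal.measurable_ofReal).mp hm0
    have hfalse : ∀ᵐ y ∂μ, (fun y => y * Real.log (Real.exp 1 + y)) y = 0 := by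
      filter_upwards [hae, hzero] with y hy hz
      exfalso
      simp only [Pi.zero_apply, ENNReal.ofReal_eq_zero] at hz
      exact absurd hz (not_le.mpr hy.1)
    rw [integral_congr_ae hfalse]
    simp only [integral_zero]
    have hSA : 0 ≤ Real.exp 1 + 1 / A * S := by positivity
    have : 1 ≤ Real.log (Real.exp 1 + 1 / A * S) := by
      rw [Real.le_log_iff_exp_le (by positivity)]
      have : 0 ≤ 1 / A * S := by positivity
      linarith
    nlinarith
  · -- M > 0 : Jensen via tangent line at c = S / M
    set c : ℝ := S / M with hcdef
    have hc_nonneg : 0 ≤ c := div_nonneg hS_nonneg hM_nonneg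
    have hec : 0 < Real.exp 1 + c := by linarith
    have hpt : ∀ᵐ y ∂μ, y * Real.log (Real.exp 1 + y)
        ≤ Real.log (Real.exp 1 + c) * y + (y ^ 2 - c * y) / (Real.exp 1 + c) := by
      filter_upwards [hae] with y hy
      have h := log_tangent c y hc_nonneg hy.1.le
      have h2 := mul_le_mul_of_nonneg_left h hy.1.le
      calc y * Real.log (Real.exp 1 + y)
          ≤ y * (Real.log (Real.exp 1 + c) + (y - c) / (Real.exp 1 + c)) := h2
        _ = Real.log (Real.exp 1 + c) * y + (y ^ 2 - c * y) / (Real.exp 1 + c) := by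
            field_simp
    have hInt_R : Integrable (fun y : ℝ => Real.log (Real.exp 1 + c) * y
        + (y ^ 2 - c * y) / (Real.exp 1 + c)) μ := by
      apply Integrable.add (hInt_y.const_mul _)
      simpa [sub_div] using ((hInt_sq.sub (hInt_y.const_mul c)).div_const (Real.exp 1 + c))
    have hIle : ∫ y, y * Real.log (Real.exp 1 + y) ∂μ
        ≤ ∫ y, (Real.log (Real.exp 1 + c) * y + (y ^ 2 - c * y) / (Real.exp 1 + c)) ∂μ :=
      integral_mono_ae hInt_L hInt_R hpt
    have hRcalc : ∫ y, (Real.log (Real.exp 1 + c) * y + (y ^ 2 - c * y) / (Real.exp 1 + c)) ∂μ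
        = M * Real.log (Real.exp 1 + c) := by
      rw [integral_add (hInt_y.const_mul _)
        (by simpa [sub_div] using ((hInt_sq.sub (hInt_y.const_mul c)).div_const (Real.exp 1 + c)))]
      rw [integral_const_mul]
      have : ∫ y, (y ^ 2 - c * y) / (Real.exp 1 + c) ∂μ
          = (∫ y, (y ^ 2 - c * y) ∂μ) / (Real.exp 1 + c) := integral_div _ _
      rw [this, integral_sub hInt_sq (hInt_y.const_mul c), integral_const_mul]
      have hcM : c * M = S := by
        rw [hcdef, div_mul_cancel₀ _ hMpos.ne']
      rw [← hSdef, ← hMdef, hcM]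
      simp [mul_comm]
    have hmono := zlog_mono hS_nonneg hMpos hMA
    have hgoal : ∫ y, y * Real.log (Real.exp 1 + y) ∂μ
        ≤ A * Real.log (Real.exp 1 + S / A) := by
      calc ∫ y, y * Real.log (Real.exp 1 + y) ∂μ
          ≤ M * Real.log (Real.exp 1 + c) := hIle.trans_eq hRcalc
        _ = M * Real.log (Real.exp 1 + S / M) := by rw [hcdef]
        _ ≤ A * Real.log (Real.exp 1 + S / A) := hmono
    calc ∫ y, y * Real.log (Real.exp 1 + y) ∂μ
        ≤ A * Real.log (Real.exp 1 + S / A) := hgoal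
      _ = A * Real.log (Real.exp 1 + 1 / A * S) := by rw [one_div, inv_mul_eq_div]
end
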